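/- arXiv:math/0609843 — 2 statements merged into one kernel-verified Lean document; each statement's English description precedes it below -/
import Mathlib

section
/- Let Δ be a basis of Φ, Y ⊆ Δ an admissible subset, and a ∈ Φ a negative root with respect to Δ; write −a = Σ_{b∈Δ} n_b·b with n_b ≥ 0 and set [−a] = {b ∈ Δ : n_b > 0}. If Y ∪ [−a] is admissible, then there exist a weight λ ∈ Λ with [λ₀(Δ) − λ] ⊆ Y and a positive integer l such that λ + l·a ∈ Λ. -/
/-!
Common setup for Werner, "Compactifications of Bruhat-Tits buildings associated to
linear representations":  a finite-dimensional real vector space `A` (the apartment),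
a root system `Φ` in the dual space together with a Weyl-group invariant inner
product, a finite Weyl-invariant set `Λ` of (K-)weights, and for every basis `Δ`
of `Φ` a highest weight `lam0 Δ ∈ Λ`.
-/

open Pointwise Filter Topology Bornology
open scoped Classical

noncomputable section

/-- A set `M` of linear forms is *connected* if the graph with vertex set `M` and an
edge between `m` and `n` iff `inn m n ≠ 0` is connected. -/
def GraphConnected {D : Type*} (inn : D → D → ℝ) (M : Set D) : Prop :=
  ∀ m ∈ M, ∀ n ∈ M,
    Relation.ReflTransGen (fun x y => x ∈ M ∧ y ∈ M ∧ inn x y ≠ 0) m n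

/-- The coefficients of `μ` as a linear combination of the elements of `Δ` (chosen
arbitrarily if one exists; it is unique when `Δ` is linearly independent). -/
noncomputable def coeffs {A : Type*} [AddCommGroup A] [Module ℝ A]
    (Δ : Finset (Module.Dual ℝ A)) (μ : Module.Dual ℝ A) : Module.Dual ℝ A → ℝ :=
  if h : ∃ n : Module.Dual ℝ A → ℝ, μ = ∑ b ∈ Δ, n b • b then h.choose else fun _ => 0

/-- The support `[μ]` of `μ` with respect to the basis `Δ`: the set of elements of `Δ`
whose coefficient in `μ` is nonzero. -/
noncomputable def supp {A : Type*} [AddCommGroup A] [Module ℝ A]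
    (Δ : Finset (Module.Dual ℝ A)) (μ : Module.Dual ℝ A) : Finset (Module.Dual ℝ A) :=
  Δ.filter fun a => coeffs Δ μ a ≠ 0

/-- Raw data: a finite set `Φ` of roots in the dual of `A`, a product `inn` on the dual,
a finite set `Λ` of weights, and a highest weight `lam0 Δ` for every basis `Δ`. -/
structure RootWeightData (A : Type*) [NormedAddCommGroup A] [NormedSpace ℝ A]
    [FiniteDimensional ℝ A] where
  Φ : Finset (Module.Dual ℝ A)
  inn : Module.Dual ℝ A → Module.Dual ℝ A → ℝ
  Λ : Finset (Module.Dual ℝ A)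
  lam0 : Finset (Module.Dual ℝ A) → Module.Dual ℝ A

namespace RootWeightData

variable {A : Type*} [NormedAddCommGroup A] [NormedSpace ℝ A] [FiniteDimensional ℝ A]
variable (S : RootWeightData A)

/-- The reflection associated to the root `a`. -/
def refl (a : Module.Dual ℝ A) : Function.End (Module.Dual ℝ A) :=
  fun x => x - (2 * S.inn x a / S.inn a a) • a

/-- The Weyl group `W`, generated by the reflections in the roots. -/
def weyl : Submonoid (Function.End (Module.Dual ℝ A)) :=
  Submonoid.closure {f | ∃ a ∈ S.Φ, f = S.refl a}

/-- `Δ` is a basis of the root system `Φ`: a linearly independent subset of `Φ` such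
that every root is a nonnegative or nonpositive linear combination of `Δ`. -/
def IsBase (Δ : Finset (Module.Dual ℝ A)) : Prop :=
  (↑Δ : Set (Module.Dual ℝ A)) ⊆ (S.Φ : Set (Module.Dual ℝ A)) ∧
  LinearIndependent ℝ (fun a : (Δ : Set (Module.Dual ℝ A)) => (a : Module.Dual ℝ A)) ∧
  ∀ a ∈ S.Φ,
    (∃ n : Module.Dual ℝ A → ℝ, (∀ b ∈ Δ, 0 ≤ n b) ∧ a = ∑ b ∈ Δ, n b • b) ∨
    (∃ n : Module.Dual ℝ A → ℝ, (∀ b ∈ Δ, 0 ≤ n b) ∧ a = -∑ b ∈ Δ, n b • b)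

/-- `Y` is an admissible subset of the basis `Δ`: `Y ⊆ Δ` and `Y ∪ {λ₀(Δ)}` is
connected. -/
def Admissible (Δ Y : Finset (Module.Dual ℝ A)) : Prop :=
  Y ⊆ Δ ∧ GraphConnected S.inn ((↑Y : Set (Module.Dual ℝ A)) ∪ {S.lam0 Δ})

end RootWeightData

/-- The whole setting of Werner's paper: the data of `RootWeightData`, where `Φ` is a
(crystallographic, possibly non-reduced) root system spanning the dual of `A`, `inn` is
a Weyl-invariant inner product, `Λ` is a finite Weyl-invariant set of weights, and
`lam0` picks, Weyl-equivariantly, a highest weight for each basis, dominating all of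
`Λ`; moreover a subset of a basis is admissible iff it is the support of
`λ₀(Δ) - λ` for some weight `λ`. -/
structure RootWeightSystem (A : Type*) [NormedAddCommGroup A] [NormedSpace ℝ A]
    [FiniteDimensional ℝ A] extends RootWeightData A where
  inn_symm : ∀ x y, inn x y = inn y x
  inn_add_left : ∀ x y z, inn (x + y) z = inn x z + inn y z
  inn_smul_left : ∀ (c : ℝ) (x y), inn (c • x) y = c * inn x y
  inn_pos : ∀ x, x ≠ 0 → 0 < inn x x
  root_ne_zero : ∀ a ∈ Φ, a ≠ (0 : Module.Dual ℝ A)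
  neg_mem : ∀ a ∈ Φ, -a ∈ Φ
  refl_mem : ∀ a ∈ Φ, ∀ b ∈ Φ, toRootWeightData.refl a b ∈ Φ
  inn_weyl_invariant :
    ∀ w ∈ toRootWeightData.weyl, ∀ x y, inn (w x) (w y) = inn x y
  phi_spans : Submodule.span ℝ (Φ : Set (Module.Dual ℝ A)) = ⊤
  exists_base : ∃ Δ, toRootWeightData.IsBase Δ
  base_cover : ∀ x : A, ∃ Δ, toRootWeightData.IsBase Δ ∧ ∀ a ∈ Δ, 0 ≤ a x
  base_weyl : ∀ w ∈ toRootWeightData.weyl, ∀ Δ, toRootWeightData.IsBase Δ →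
    toRootWeightData.IsBase (Δ.image (w : Module.Dual ℝ A → Module.Dual ℝ A))
  lam0_mem : ∀ Δ, toRootWeightData.IsBase Δ → lam0 Δ ∈ Λ
  lam0_dominates : ∀ Δ, toRootWeightData.IsBase Δ → ∀ l ∈ Λ,
    ∃ n : Module.Dual ℝ A → ℝ, (∀ a ∈ Δ, 0 ≤ n a) ∧ lam0 Δ - l = ∑ a ∈ Δ, n a • a
  weight_weyl_invariant : ∀ w ∈ toRootWeightData.weyl, ∀ l ∈ Λ, w l ∈ Λ
  lam0_equivariant : ∀ w ∈ toRootWeightData.weyl, ∀ Δ, toRootWeightData.IsBase Δ →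
    lam0 (Δ.image (w : Module.Dual ℝ A → Module.Dual ℝ A)) = w (lam0 Δ)
  integrality : ∀ l ∈ Λ, ∀ a ∈ Φ, ∃ k : ℤ, 2 * inn l a / inn a a = (k : ℝ)
  admissible_iff_support : ∀ Δ, toRootWeightData.IsBase Δ → ∀ Y ⊆ Δ,
    (toRootWeightData.Admissible Δ Y ↔ ∃ l ∈ Λ, supp Δ (lam0 Δ - l) = Y)

namespace RootWeightSystem

variable {A : Type*} [NormedAddCommGroup A] [NormedSpace ℝ A] [FiniteDimensional ℝ A]
variable (S : RootWeightSystem A)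

/-- The face `F_Y^Δ` of the apartment `A` associated to a basis `Δ` and an admissible
subset `Y ⊆ Δ`. -/
def Face (Δ Y : Finset (Module.Dual ℝ A)) : Set A :=
  {x | (∀ a ∈ Y, a x = 0) ∧
    ∀ l ∈ S.Λ, ¬ supp Δ (S.lam0 Δ - l) ⊆ Y → 0 < (S.lam0 Δ - l) x}

/-- `F` belongs to the collection `Σ` of faces. -/
def IsFace (F : Set A) : Prop :=
  ∃ Δ Y, S.toRootWeightData.IsBase Δ ∧ S.toRootWeightData.Admissible Δ Y ∧
    F = S.Face Δ Y

/-- The collection `Σ` of all faces. -/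
def Faces : Type _ := {F : Set A // S.IsFace F}

/-- The relation identifying `(F, u)` and `(F, v)` when `u - v ∈ ⟨F⟩`; the quotient is
the disjoint union `Ā = ⊔_{F ∈ Σ} A/⟨F⟩`. -/
def AbarRel (p q : S.Faces × A) : Prop :=
  p.1 = q.1 ∧ p.2 - q.2 ∈ Submodule.span ℝ p.1.val

/-- The compactified apartment `Ā = ⊔_{F ∈ Σ} A_F`, `A_F = A/⟨F⟩`. -/
def Abar : Type _ := Quot S.AbarRel

/-- `r_F(u)`, the image of `u ∈ A` in the stratum `A_F` of `Ā`. -/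
def mkAbar (F : S.Faces) (u : A) : S.Abar := Quot.mk _ (F, u)

/-- The basic set `Γ_F(U) = ⋃_{F' ⊆ cl F} r_{F'}(U + F)` of `Ā`. -/
def Gamma (F : S.Faces) (U : Set A) : Set S.Abar :=
  {p | ∃ F' : S.Faces, F'.val ⊆ closure F.val ∧ ∃ u ∈ U + F.val, p = S.mkAbar F' u}

/-- The topology of `Ā`, generated by the sets `Γ_F(U)` for `F ∈ Σ` and `U ⊆ A`
bounded and open. -/
instance : TopologicalSpace S.Abar :=
  TopologicalSpace.generateFrom
    {V : Set S.Abar | ∃ (F : S.Faces) (U : Set A),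
      IsOpen U ∧ IsBounded U ∧ V = S.Gamma F U}

/-- `f_Ω(a) = inf {t : Ω ⊆ cl_Ā {z ∈ A : a(z) ≥ -t}} ∈ ℝ ∪ {±∞}`, where `A` is embedded
in `Ā` as the stratum of the face `F₀ = {0}`. -/
def fOmega (F₀ : S.Faces) (Ω : Set S.Abar) (a : Module.Dual ℝ A) : EReal :=
  sInf ((fun t : ℝ => (t : EReal)) ''
    {t : ℝ | Ω ⊆ closure (S.mkAbar F₀ '' {z : A | -t ≤ a z})})

end RootWeightSystem


variable {A : Type*} [NormedAddCommGroup A] [NormedSpace ℝ A] [FiniteDimensional ℝ A]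

section AuxCoeffs

variable {A : Type*} [AddCommGroup A] [Module ℝ A]

lemma li_coeff_zero (Δ : Finset (Module.Dual ℝ A))
    (hli : LinearIndependent ℝ (fun a : (Δ : Set (Module.Dual ℝ A)) => (a : Module.Dual ℝ A)))
    (f : Module.Dual ℝ A → ℝ) (hf : ∑ b ∈ Δ, f b • b = 0) : ∀ b ∈ Δ, f b = 0 := by
  have h2 : ∑ b : (Δ : Set (Module.Dual ℝ A)), f b • (b : Module.Dual ℝ A) = 0 := by
    rw [← hf]; exact Finset.sum_coe_sort Δ (fun b => f b • b)
  have := Fintype.linearIndependent_iff.mp hli (fun b => f b) h2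
  intro b hb
  exact this ⟨b, hb⟩

lemma rep_unique (Δ : Finset (Module.Dual ℝ A))
    (hli : LinearIndependent ℝ (fun a : (Δ : Set (Module.Dual ℝ A)) => (a : Module.Dual ℝ A)))
    (f g : Module.Dual ℝ A → ℝ)
    (h : ∑ b ∈ Δ, f b • b = ∑ b ∈ Δ, g b • b) : ∀ b ∈ Δ, f b = g b := by
  have h0 : ∑ b ∈ Δ, (f b - g b) • b = 0 := by
    have : ∑ b ∈ Δ, (f b - g b) • b = (∑ b ∈ Δ, f b • b) - ∑ b ∈ Δ, g b • b := by
      rw [← Finset.sum_sub_distrib]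
      exact Finset.sum_congr rfl fun b _ => sub_smul (f b) (g b) b
    rw [this, h, sub_self]
  intro b hb
  have := li_coeff_zero Δ hli _ h0 b hb
  linarith

lemma coeffs_eq_of_rep (Δ : Finset (Module.Dual ℝ A))
    (hli : LinearIndependent ℝ (fun a : (Δ : Set (Module.Dual ℝ A)) => (a : Module.Dual ℝ A)))
    (μ : Module.Dual ℝ A) (n : Module.Dual ℝ A → ℝ)
    (h : μ = ∑ b ∈ Δ, n b • b) : ∀ b ∈ Δ, coeffs Δ μ b = n b := by
  have hex : ∃ n : Module.Dual ℝ A → ℝ, μ = ∑ b ∈ Δ, n b • b := ⟨n, h⟩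
  have hch : coeffs Δ μ = hex.choose := by unfold coeffs; rw [dif_pos hex]
  have hspec : μ = ∑ b ∈ Δ, hex.choose b • b := hex.choose_spec
  intro b hb
  rw [hch]
  exact rep_unique Δ hli _ _ (hspec.symm.trans h) b hb

lemma sum_coeffs (Δ : Finset (Module.Dual ℝ A)) (μ : Module.Dual ℝ A)
    (hex : ∃ n : Module.Dual ℝ A → ℝ, μ = ∑ b ∈ Δ, n b • b) :
    μ = ∑ b ∈ Δ, coeffs Δ μ b • b := by
  have hch : coeffs Δ μ = hex.choose := by unfold coeffs; rw [dif_pos hex]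
  rw [hch]; exact hex.choose_spec

lemma mem_supp_iff (Δ : Finset (Module.Dual ℝ A)) (μ b : Module.Dual ℝ A) :
    b ∈ supp Δ μ ↔ b ∈ Δ ∧ coeffs Δ μ b ≠ 0 := Finset.mem_filter

lemma supp_zero (Δ : Finset (Module.Dual ℝ A))
    (hli : LinearIndependent ℝ (fun a : (Δ : Set (Module.Dual ℝ A)) => (a : Module.Dual ℝ A))) :
    supp Δ (0 : Module.Dual ℝ A) = ∅ := by
  have h := coeffs_eq_of_rep Δ hli 0 (fun _ => 0) (by simp)
  ext b
  simp only [mem_supp_iff, Finset.notMem_empty, iff_false, not_and, ne_eq, not_not]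
  intro hb; exact h b hb

end AuxCoeffs

section AuxInn

variable {A : Type*} [NormedAddCommGroup A] [NormedSpace ℝ A] [FiniteDimensional ℝ A]
variable (S : RootWeightSystem A)

lemma inn_zero_left (y : Module.Dual ℝ A) : S.inn 0 y = 0 := by
  have h := S.inn_smul_left 0 0 y
  rw [zero_smul] at h
  linarith

lemma inn_zero_right (x : Module.Dual ℝ A) : S.inn x 0 = 0 := by
  rw [S.inn_symm]; exact inn_zero_left S x

lemma inn_neg_left (x y : Module.Dual ℝ A) : S.inn (-x) y = -S.inn x y := by
  have h := S.inn_smul_left (-1) x y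
  rw [show (-1 : ℝ) • x = -x from neg_one_smul ℝ x] at h
  linarith

lemma inn_sub_left (x z y : Module.Dual ℝ A) :
    S.inn (x - z) y = S.inn x y - S.inn z y := by
  have h := S.inn_add_left x (-z) y
  rw [← sub_eq_add_neg, inn_neg_left] at h
  linarith

lemma inn_sum_left {ι : Type*} (s : Finset ι) (f : ι → Module.Dual ℝ A)
    (y : Module.Dual ℝ A) : S.inn (∑ i ∈ s, f i) y = ∑ i ∈ s, S.inn (f i) y := by
  induction s using Finset.cons_induction with
  | empty => simpa using inn_zero_left S y
  | cons i s hi ih => rw [Finset.sum_cons, Finset.sum_cons, S.inn_add_left, ih]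

lemma refl_weight {a l : Module.Dual ℝ A} (ha : a ∈ S.Φ) (hl : l ∈ S.Λ) :
    S.toRootWeightData.refl a l ∈ S.Λ :=
  S.weight_weyl_invariant _ (Submonoid.subset_closure ⟨a, ha, rfl⟩) l hl

lemma dom_coeffs {Δ : Finset (Module.Dual ℝ A)} (hΔ : S.toRootWeightData.IsBase Δ)
    {l : Module.Dual ℝ A} (hl : l ∈ S.Λ) :
    (S.lam0 Δ - l = ∑ b ∈ Δ, coeffs Δ (S.lam0 Δ - l) b • b) ∧
      ∀ b ∈ Δ, 0 ≤ coeffs Δ (S.lam0 Δ - l) b := by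
  obtain ⟨n, hn0, hrep⟩ := S.lam0_dominates Δ hΔ l hl
  refine ⟨sum_coeffs Δ _ ⟨n, hrep⟩, fun b hb => ?_⟩
  rw [coeffs_eq_of_rep Δ hΔ.2.1 _ n hrep b hb]
  exact hn0 b hb

lemma inn_rep {Δ : Finset (Module.Dual ℝ A)} (μ : Module.Dual ℝ A)
    (hex : ∃ n : Module.Dual ℝ A → ℝ, μ = ∑ b ∈ Δ, n b • b) (x : Module.Dual ℝ A) :
    S.inn μ x = ∑ b ∈ Δ, coeffs Δ μ b * S.inn b x := by
  conv_lhs => rw [sum_coeffs Δ μ hex]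
  rw [inn_sum_left]
  exact Finset.sum_congr rfl fun b _ => S.inn_smul_left _ _ _

lemma inn_weight_formula {Δ : Finset (Module.Dual ℝ A)} (hΔ : S.toRootWeightData.IsBase Δ)
    {l : Module.Dual ℝ A} (hl : l ∈ S.Λ) (x : Module.Dual ℝ A) :
    S.inn l x = S.inn (S.lam0 Δ) x - ∑ b ∈ Δ, coeffs Δ (S.lam0 Δ - l) b * S.inn b x := by
  have h1 := inn_rep S (S.lam0 Δ - l) ⟨_, (dom_coeffs S hΔ hl).1⟩ x
  have h2 := inn_sub_left S (S.lam0 Δ) l x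
  linarith

lemma lam0_inn_nonneg {Δ : Finset (Module.Dual ℝ A)} (hΔ : S.toRootWeightData.IsBase Δ)
    {b : Module.Dual ℝ A} (hb : b ∈ Δ) : 0 ≤ S.inn (S.lam0 Δ) b := by
  set κ := 2 * S.inn (S.lam0 Δ) b / S.inn b b with hκdef
  have hbΦ : b ∈ S.Φ := hΔ.1 hb
  have hbb : 0 < S.inn b b := S.inn_pos b (S.root_ne_zero b hbΦ)
  have hl' : S.toRootWeightData.refl b (S.lam0 Δ) ∈ S.Λ :=
    refl_weight S hbΦ (S.lam0_mem Δ hΔ)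
  have hrep : S.lam0 Δ - S.toRootWeightData.refl b (S.lam0 Δ)
      = ∑ c ∈ Δ, (if c = b then κ else 0) • c := by
    show S.lam0 Δ - (S.lam0 Δ - κ • b) = _
    rw [sub_sub_cancel, Finset.sum_eq_single b (fun c _ hc => by rw [if_neg hc, zero_smul])
      (fun h => absurd hb h), if_pos rfl]
  obtain ⟨n, hn0, hrep'⟩ := S.lam0_dominates Δ hΔ _ hl'
  have := rep_unique Δ hΔ.2.1 _ _ (hrep.symm.trans hrep') b hb
  rw [if_pos rfl] at this
  have hκ : 0 ≤ κ := this ▸ hn0 b hb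
  have h2 : 0 ≤ κ * S.inn b b := mul_nonneg hκ hbb.le
  rw [hκdef, div_mul_cancel₀ _ hbb.ne'] at h2
  linarith

lemma base_inn_nonpos {Δ : Finset (Module.Dual ℝ A)} (hΔ : S.toRootWeightData.IsBase Δ)
    {b c : Module.Dual ℝ A} (hb : b ∈ Δ) (hc : c ∈ Δ) (hbc : b ≠ c) :
    S.inn b c ≤ 0 := by
  set κ := 2 * S.inn c b / S.inn b b with hκdef
  have hbΦ : b ∈ S.Φ := hΔ.1 hb
  have hcΦ : c ∈ S.Φ := hΔ.1 hc
  have hbb : 0 < S.inn b b := S.inn_pos b (S.root_ne_zero b hbΦ)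
  have hroot : S.toRootWeightData.refl b c ∈ S.Φ := S.refl_mem b hbΦ c hcΦ
  have hrep : S.toRootWeightData.refl b c
      = ∑ d ∈ Δ, ((if d = c then (1:ℝ) else 0) - if d = b then κ else 0) • d := by
    show c - κ • b = _
    have h1 : ∑ d ∈ Δ, ((if d = c then (1:ℝ) else 0) - if d = b then κ else 0) • d
        = (∑ d ∈ Δ, (if d = c then (1:ℝ) else 0) • d) - ∑ d ∈ Δ, (if d = b then κ else 0) • d := by
      rw [← Finset.sum_sub_distrib]
      exact Finset.sum_congr rfl fun d _ =>
        sub_smul (if d = c then (1:ℝ) else 0) (if d = b then κ else 0) d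
    rw [h1, Finset.sum_eq_single c (fun d _ hd => by rw [if_neg hd, zero_smul])
      (fun h => absurd hc h), if_pos rfl, one_smul,
      Finset.sum_eq_single b (fun d _ hd => by rw [if_neg hd, zero_smul])
      (fun h => absurd hb h), if_pos rfl]
  have hcb : S.inn c b ≤ 0 := by
    rcases hΔ.2.2 _ hroot with ⟨n, hn0, hrep'⟩ | ⟨n, hn0, hrep'⟩
    · have := rep_unique Δ hΔ.2.1 _ _ (hrep.symm.trans hrep') b hb
      rw [if_neg hbc, if_pos rfl, zero_sub] at this
      have hκ : κ ≤ 0 := by have := hn0 b hb; linarith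
      have h2 : κ * S.inn b b ≤ 0 := mul_nonpos_of_nonpos_of_nonneg hκ hbb.le
      rw [hκdef, div_mul_cancel₀ _ hbb.ne'] at h2
      linarith
    · exfalso
      have hrep'' : S.toRootWeightData.refl b c = ∑ d ∈ Δ, (-n d) • d := by
        rw [hrep']
        rw [← Finset.sum_neg_distrib]
        exact Finset.sum_congr rfl fun d _ => (neg_smul _ _).symm
      have := rep_unique Δ hΔ.2.1 _ _ (hrep.symm.trans hrep'') c hc
      rw [if_pos rfl, if_neg (Ne.symm hbc), sub_zero] at this
      have := hn0 c hc
      linarith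
  rw [S.inn_symm]; exact hcb

lemma refl_step {Δ : Finset (Module.Dual ℝ A)} (hΔ : S.toRootWeightData.IsBase Δ)
    {l : Module.Dual ℝ A} (hl : l ∈ S.Λ) {c : Module.Dual ℝ A} (hc : c ∈ Δ) :
    ∃ l' ∈ S.Λ, (∀ x, S.inn l' x = S.inn l x - (2 * S.inn l c / S.inn c c) * S.inn c x) ∧
      supp Δ (S.lam0 Δ - l') ⊆ supp Δ (S.lam0 Δ - l) ∪ {c} := by
  set κ := 2 * S.inn l c / S.inn c c with hκdef
  have hcΦ : c ∈ S.Φ := hΔ.1 hc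
  refine ⟨S.toRootWeightData.refl c l, refl_weight S hcΦ hl, fun x => ?_, ?_⟩
  · show S.inn (l - κ • c) x = _
    rw [inn_sub_left, S.inn_smul_left]
  · have hdoml := (dom_coeffs S hΔ hl).1
    have hrep : S.lam0 Δ - S.toRootWeightData.refl c l
        = ∑ b ∈ Δ, (coeffs Δ (S.lam0 Δ - l) b + if b = c then κ else 0) • b := by
      show S.lam0 Δ - (l - κ • c) = _
      have h1 : ∑ b ∈ Δ, (coeffs Δ (S.lam0 Δ - l) b + if b = c then κ else 0) • b
          = (∑ b ∈ Δ, coeffs Δ (S.lam0 Δ - l) b • b) + ∑ b ∈ Δ, (if b = c then κ else 0) • b := by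
        rw [← Finset.sum_add_distrib]
        exact Finset.sum_congr rfl fun b _ =>
          add_smul (coeffs Δ (S.lam0 Δ - l) b) (if b = c then κ else 0) b
      rw [h1, ← hdoml, Finset.sum_eq_single c (fun d _ hd => by rw [if_neg hd, zero_smul])
        (fun h => absurd hc h), if_pos rfl]
      abel
    have he := coeffs_eq_of_rep Δ hΔ.2.1 _ _ hrep
    intro b hb
    obtain ⟨hbΔ, hbne⟩ := (mem_supp_iff Δ _ b).mp hb
    rw [he b hbΔ] at hbne
    by_cases hbc : b = c
    · exact Finset.mem_union_right _ (by simp [hbc])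
    · rw [if_neg hbc, add_zero] at hbne
      exact Finset.mem_union_left _ ((mem_supp_iff Δ _ b).mpr ⟨hbΔ, hbne⟩)

lemma first_hit {α : Type*} (E : α → α → Prop) (T : Set α) {x z : α}
    (h : Relation.ReflTransGen E x z) (hx : x ∉ T) (hz : z ∈ T) :
    ∃ u v, Relation.ReflTransGen (fun p q => E p q ∧ p ∉ T ∧ q ∉ T) x u ∧ u ∉ T ∧ E u v ∧ v ∈ T := by
  have H : ∀ {w}, Relation.ReflTransGen E x w →
      (w ∉ T → (Relation.ReflTransGen (fun p q => E p q ∧ p ∉ T ∧ q ∉ T) x w ∨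
        ∃ u v, Relation.ReflTransGen (fun p q => E p q ∧ p ∉ T ∧ q ∉ T) x u ∧
          u ∉ T ∧ E u v ∧ v ∈ T)) ∧
      (w ∈ T → ∃ u v, Relation.ReflTransGen (fun p q => E p q ∧ p ∉ T ∧ q ∉ T) x u ∧
          u ∉ T ∧ E u v ∧ v ∈ T) := by
    intro w hw
    induction hw with
    | refl => exact ⟨fun _ => Or.inl Relation.ReflTransGen.refl, fun hw => absurd hw hx⟩
    | @tail y z' h' e ih =>
      constructor
      · intro hz'
        by_cases hy : y ∈ T
        · exact Or.inr (ih.2 hy)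
        · rcases ih.1 hy with hc | hfh
          · exact Or.inl (hc.tail ⟨e, hy, hz'⟩)
          · exact Or.inr hfh
      · intro hz'
        by_cases hy : y ∈ T
        · exact ih.2 hy
        · rcases ih.1 hy with hc | hfh
          · exact ⟨y, z', hc, hy, e, hz'⟩
          · exact hfh
  exact (H h).2 hz

end AuxInn

/-- Let `Y ⊆ Δ` be admissible and `a ∈ Φ` a negative root with
respect to `Δ`, with support `[-a]`.  If `Y ∪ [-a]` is admissible, then there are a
weight `λ ∈ Λ` with `[λ₀(Δ) - λ] ⊆ Y` and a positive integer `l` with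
`λ + l·a ∈ Λ`. -/
theorem exists_weight_add_root (S : RootWeightSystem A)
    (Δ Y : Finset (Module.Dual ℝ A))
    (hΔ : S.toRootWeightData.IsBase Δ) (hY : S.toRootWeightData.Admissible Δ Y)
    (a : Module.Dual ℝ A) (ha : a ∈ S.Φ)
    (hneg : ∃ n : Module.Dual ℝ A → ℝ, (∀ b ∈ Δ, 0 ≤ n b) ∧
      -a = ∑ b ∈ Δ, n b • b)
    (hadm : S.toRootWeightData.Admissible Δ (Y ∪ supp Δ (-a))) :
    ∃ l ∈ S.Λ, supp Δ (S.lam0 Δ - l) ⊆ Y ∧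
      ∃ k : ℕ, 0 < k ∧ l + (k : ℝ) • a ∈ S.Λ := by
  obtain ⟨nn, hnn0, hnnrep⟩ := hneg
  have hli := hΔ.2.1
  have hl0L : S.lam0 Δ ∈ S.Λ := S.lam0_mem Δ hΔ
  have hexa : ∃ n : Module.Dual ℝ A → ℝ, -a = ∑ b ∈ Δ, n b • b := ⟨nn, hnnrep⟩
  have hca : ∀ b ∈ Δ, 0 ≤ coeffs Δ (-a) b := fun b hb => by
    rw [coeffs_eq_of_rep Δ hli _ nn hnnrep b hb]; exact hnn0 b hb
  have hSaΔ : supp Δ (-a) ⊆ Δ := Finset.filter_subset _ _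
  have hinnax : ∀ x, S.inn (-a) x = ∑ b ∈ Δ, coeffs Δ (-a) b * S.inn b x :=
    fun x => inn_rep S _ hexa x
  have haa : 0 < S.inn a a := S.inn_pos a (S.root_ne_zero a ha)
  -- the concluding reflection step
  have FIN : ∀ l ∈ S.Λ, supp Δ (S.lam0 Δ - l) ⊆ Y → 0 < S.inn l (-a) →
      ∃ l ∈ S.Λ, supp Δ (S.lam0 Δ - l) ⊆ Y ∧ ∃ k : ℕ, 0 < k ∧ l + (k : ℝ) • a ∈ S.Λ := by
    intro l hl hsupp hpos
    have hla : S.inn l a < 0 := by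
      have h1 : S.inn l (-a) = -S.inn l a := by
        rw [S.inn_symm, inn_neg_left, S.inn_symm]
      linarith
    obtain ⟨k, hk⟩ := S.integrality l hl a ha
    have hkneg : (k : ℝ) < 0 := by
      rw [← hk]; exact div_neg_of_neg_of_pos (by linarith) haa
    have hkneg' : k < 0 := by exact_mod_cast hkneg
    refine ⟨l, hl, hsupp, (-k).toNat, by omega, ?_⟩
    have h1 : (((-k).toNat : ℕ) : ℝ) = -(k : ℝ) := by
      have h2 : (((-k).toNat : ℕ) : ℤ) = -k := Int.toNat_of_nonneg (by omega)
      exact_mod_cast h2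
    have h3 : l + (((-k).toNat : ℕ) : ℝ) • a = S.toRootWeightData.refl a l := by
      show _ = l - (2 * S.inn l a / S.inn a a) • a
      rw [hk, h1]
      module
    rw [h3]
    exact refl_weight S ha hl
  have hterms : ∀ b ∈ Δ, 0 ≤ coeffs Δ (-a) b * S.inn b (S.lam0 Δ) :=
    fun b hb => mul_nonneg (hca b hb) (by rw [S.inn_symm]; exact lam0_inn_nonneg S hΔ hb)
  have hl0a : 0 ≤ S.inn (S.lam0 Δ) (-a) := by
    rw [S.inn_symm, hinnax]
    exact Finset.sum_nonneg hterms
  by_cases hcase : 0 < S.inn (S.lam0 Δ) (-a)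
  · exact FIN (S.lam0 Δ) hl0L
      (by rw [sub_self, supp_zero Δ hli]; exact Finset.empty_subset Y) hcase
  · have h0 : S.inn (S.lam0 Δ) (-a) = 0 := le_antisymm (not_lt.mp hcase) hl0a
    have h0' : ∑ b ∈ Δ, coeffs Δ (-a) b * S.inn b (S.lam0 Δ) = 0 := by
      rw [← hinnax, ← S.inn_symm]; exact h0
    have hperp : ∀ v ∈ supp Δ (-a), S.inn (S.lam0 Δ) v = 0 := by
      intro v hv
      obtain ⟨hvΔ, hvne⟩ := (mem_supp_iff Δ _ v).mp hv
      have h1 := (Finset.sum_eq_zero_iff_of_nonneg hterms).mp h0' v hvΔ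
      rw [S.inn_symm]
      rcases mul_eq_zero.mp h1 with h | h
      · exact absurd h hvne
      · exact h
    have hSane : (supp Δ (-a)).Nonempty := by
      rw [Finset.nonempty_iff_ne_empty]
      intro hemp
      apply S.root_ne_zero a ha
      have hza : -a = 0 := by
        rw [sum_coeffs Δ (-a) hexa]
        apply Finset.sum_eq_zero
        intro b hb
        have hc0 : coeffs Δ (-a) b = 0 := by
          by_contra hne
          have := (mem_supp_iff Δ (-a) b).mpr ⟨hb, hne⟩
          rw [hemp] at this
          exact absurd this (Finset.notMem_empty b)
        rw [hc0, zero_smul]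
      simpa using hza
    obtain ⟨b₀, hb₀⟩ := hSane
    have hl0Sa : S.lam0 Δ ∉ supp Δ (-a) := by
      intro hmem
      have h1 := hperp _ hmem
      have h2 : S.lam0 Δ ≠ 0 := S.root_ne_zero _ (hΔ.1 (hSaΔ hmem))
      exact absurd h1 (ne_of_gt (S.inn_pos _ h2))
    have hconn : GraphConnected S.inn
        ((↑(Y ∪ supp Δ (-a)) : Set (Module.Dual ℝ A)) ∪ {S.lam0 Δ}) := hadm.2
    have hl0M : S.lam0 Δ ∈ (↑(Y ∪ supp Δ (-a)) : Set (Module.Dual ℝ A)) ∪ {S.lam0 Δ} :=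
      Set.mem_union_right _ rfl
    have hb₀M : b₀ ∈ (↑(Y ∪ supp Δ (-a)) : Set (Module.Dual ℝ A)) ∪ {S.lam0 Δ} :=
      Set.mem_union_left _ (Finset.mem_coe.mpr (Finset.mem_union_right _ hb₀))
    have hchain := hconn _ hl0M _ hb₀M
    obtain ⟨u, v, hchain', huT, ⟨huM, hvM, huv⟩, hvT⟩ :=
      first_hit _ (↑(supp Δ (-a)) : Set (Module.Dual ℝ A)) hchain
        (fun h => hl0Sa (Finset.mem_coe.mp h)) (Finset.mem_coe.mpr hb₀)
    have hvSa : v ∈ supp Δ (-a) := Finset.mem_coe.mp hvT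
    by_cases hul0 : u = S.lam0 Δ
    · exfalso
      apply huv
      rw [hul0]
      exact hperp v hvSa
    · have huSa : u ∉ supp Δ (-a) := fun hmem => huT (Finset.mem_coe.mpr hmem)
      have huY : u ∈ Y := by
        rcases huM with h | h
        · rcases Finset.mem_union.mp (Finset.mem_coe.mp h) with h' | h'
          · exact h'
          · exact absurd h' huSa
        · exact absurd h hul0
      have hne0 : S.lam0 Δ ≠ 0 := by
        rcases Relation.ReflTransGen.cases_head hchain' with heq | ⟨y, ⟨⟨_, _, hinny⟩, _, _⟩, _⟩
        · exact absurd heq.symm hul0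
        · intro hz0
          rw [hz0] at hinny
          exact hinny (inn_zero_left S y)
      have MAIN : ∀ z, Relation.ReflTransGen
          (fun p q => (p ∈ (↑(Y ∪ supp Δ (-a)) : Set (Module.Dual ℝ A)) ∪ {S.lam0 Δ} ∧
              q ∈ (↑(Y ∪ supp Δ (-a)) : Set (Module.Dual ℝ A)) ∪ {S.lam0 Δ} ∧ S.inn p q ≠ 0) ∧
            p ∉ (↑(supp Δ (-a)) : Set (Module.Dual ℝ A)) ∧
            q ∉ (↑(supp Δ (-a)) : Set (Module.Dual ℝ A)))
          (S.lam0 Δ) z →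
          ∃ l ∈ S.Λ, supp Δ (S.lam0 Δ - l) ⊆ Y \ supp Δ (-a) ∧ 0 < S.inn l z := by
        intro z hz
        induction hz with
        | refl =>
          exact ⟨S.lam0 Δ, hl0L,
            by rw [sub_self, supp_zero Δ hli]; exact Finset.empty_subset _,
            S.inn_pos _ hne0⟩
        | @tail x y hx e ih =>
          obtain ⟨l, hl, hsupp, hpos⟩ := ih
          obtain ⟨⟨hxM, hyM, hxy⟩, hxT, hyT⟩ := e
          by_cases hyl0 : y = S.lam0 Δ
          · subst hyl0
            exact ⟨S.lam0 Δ, hl0L,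
              by rw [sub_self, supp_zero Δ hli]; exact Finset.empty_subset _,
              S.inn_pos _ hne0⟩
          · have hySa : y ∉ supp Δ (-a) := fun hmem => hyT (Finset.mem_coe.mpr hmem)
            have hyY : y ∈ Y := by
              rcases hyM with h | h
              · rcases Finset.mem_union.mp (Finset.mem_coe.mp h) with h' | h'
                · exact h'
                · exact absurd h' hySa
              · exact absurd h hyl0
            have hyΔ : y ∈ Δ := hY.1 hyY
            by_cases hxyeq : x = y
            · exact ⟨l, hl, hsupp, hxyeq ▸ hpos⟩
            · have hxcase : x ∈ Y ∨ x = S.lam0 Δ := by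
                rcases hxM with h | h
                · rcases Finset.mem_union.mp (Finset.mem_coe.mp h) with h' | h'
                  · exact Or.inl h'
                  · exact absurd h' (fun hmem => hxT (Finset.mem_coe.mpr hmem))
                · exact Or.inr h
              rcases hxcase with hxY | hxl0
              · have hxΔ : x ∈ Δ := hY.1 hxY
                have hyy : 0 < S.inn y y := S.inn_pos y (S.root_ne_zero y (hΔ.1 hyΔ))
                rcases lt_trichotomy (S.inn l y) 0 with hly | hly | hly
                · obtain ⟨l', hl', hinn', hsupp'⟩ := refl_step S hΔ hl hyΔ
                  refine ⟨l', hl', ?_, ?_⟩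
                  · refine hsupp'.trans (Finset.union_subset hsupp ?_)
                    intro w hw
                    rw [Finset.mem_singleton] at hw
                    subst hw
                    exact Finset.mem_sdiff.mpr ⟨hyY, hySa⟩
                  · rw [hinn' y, div_mul_cancel₀ _ hyy.ne']
                    linarith
                · have hxy0 : S.inn x y < 0 :=
                    lt_of_le_of_ne (base_inn_nonpos S hΔ hxΔ hyΔ hxyeq) hxy
                  have hxx : 0 < S.inn x x := S.inn_pos x (S.root_ne_zero x (hΔ.1 hxΔ))
                  have hxSa : x ∉ supp Δ (-a) := fun hmem => hxT (Finset.mem_coe.mpr hmem)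
                  obtain ⟨l', hl', hinn', hsupp'⟩ := refl_step S hΔ hl hxΔ
                  have hκ : 0 < 2 * S.inn l x / S.inn x x := div_pos (by linarith) hxx
                  refine ⟨l', hl', ?_, ?_⟩
                  · refine hsupp'.trans (Finset.union_subset hsupp ?_)
                    intro w hw
                    rw [Finset.mem_singleton] at hw
                    subst hw
                    exact Finset.mem_sdiff.mpr ⟨hxY, hxSa⟩
                  · rw [hinn' y, hly]
                    nlinarith [mul_pos hκ (neg_pos.mpr hxy0)]
                · exact ⟨l, hl, hsupp, hly⟩
              · have hlam0y : S.inn (S.lam0 Δ) y ≠ 0 := hxl0 ▸ hxy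
                exact ⟨S.lam0 Δ, hl0L,
                  by rw [sub_self, supp_zero Δ hli]; exact Finset.empty_subset _,
                  lt_of_le_of_ne (lam0_inn_nonneg S hΔ hyΔ) (Ne.symm hlam0y)⟩
      obtain ⟨l, hl, hsupp, hposu⟩ := MAIN u hchain'
      have huΔ : u ∈ Δ := hY.1 huY
      have huu : 0 < S.inn u u := S.inn_pos u (S.root_ne_zero u (hΔ.1 huΔ))
      -- inn l (-a) ≥ 0
      have hformula := inn_weight_formula S hΔ hl (-a)
      have hterms2 : ∀ b ∈ Δ, coeffs Δ (S.lam0 Δ - l) b * S.inn b (-a) ≤ 0 := by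
        intro b hb
        by_cases hcb : coeffs Δ (S.lam0 Δ - l) b = 0
        · rw [hcb, zero_mul]
        · have hbsupp : b ∈ supp Δ (S.lam0 Δ - l) := (mem_supp_iff Δ _ b).mpr ⟨hb, hcb⟩
          have hbSa : b ∉ supp Δ (-a) := (Finset.mem_sdiff.mp (hsupp hbsupp)).2
          have hble : S.inn b (-a) ≤ 0 := by
            rw [S.inn_symm, hinnax]
            apply Finset.sum_nonpos
            intro c hc
            by_cases hcbq : c = b
            · subst hcbq
              have hc0 : coeffs Δ (-a) c = 0 := by
                by_contra hne
                exact hbSa ((mem_supp_iff Δ (-a) c).mpr ⟨hc, hne⟩)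
              rw [hc0, zero_mul]
            · exact mul_nonpos_iff.mpr
                (Or.inl ⟨hca c hc, base_inn_nonpos S hΔ hc hb hcbq⟩)
          exact mul_nonpos_iff.mpr (Or.inl ⟨(dom_coeffs S hΔ hl).2 b hb, hble⟩)
      have hlnna : 0 ≤ S.inn l (-a) := by
        rw [hformula, h0]
        have := Finset.sum_nonpos hterms2
        linarith
      -- inn u (-a) < 0
      have hvΔ : v ∈ Δ := hSaΔ hvSa
      have huvne : u ≠ v := fun h => huSa (h ▸ hvSa)
      have hinnvu : S.inn v u < 0 :=
        lt_of_le_of_ne (base_inn_nonpos S hΔ hvΔ huΔ huvne.symm)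
          (fun h => huv (by rw [S.inn_symm]; exact h))
      have hua : S.inn u (-a) < 0 := by
        rw [S.inn_symm, hinnax]
        have hle : ∀ b ∈ Δ, coeffs Δ (-a) b * S.inn b u ≤ (fun _ => (0:ℝ)) b := by
          intro b hb
          by_cases hbu : b = u
          · subst hbu
            have hc0 : coeffs Δ (-a) b = 0 := by
              by_contra hne
              exact huSa ((mem_supp_iff Δ (-a) b).mpr ⟨hb, hne⟩)
            rw [hc0, zero_mul]
          · exact mul_nonpos_iff.mpr (Or.inl ⟨hca b hb, base_inn_nonpos S hΔ hb huΔ hbu⟩)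
        have hvterm : coeffs Δ (-a) v * S.inn v u < (fun _ => (0:ℝ)) v := by
          have hcv : 0 < coeffs Δ (-a) v :=
            lt_of_le_of_ne (hca v hvΔ) (Ne.symm ((mem_supp_iff Δ (-a) v).mp hvSa).2)
          exact mul_neg_of_pos_of_neg hcv hinnvu
        have h1 : ∑ b ∈ Δ, coeffs Δ (-a) b * S.inn b u < ∑ b ∈ Δ, (fun _ => (0:ℝ)) b :=
          Finset.sum_lt_sum hle ⟨v, hvΔ, hvterm⟩
        simpa using h1
      obtain ⟨l', hl', hinn', hsupp'⟩ := refl_step S hΔ hl huΔ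
      have hκ : 0 < 2 * S.inn l u / S.inn u u := div_pos (by linarith) huu
      apply FIN l' hl'
      · refine hsupp'.trans (Finset.union_subset (hsupp.trans Finset.sdiff_subset) ?_)
        intro w hw
        rw [Finset.mem_singleton] at hw
        subst hw
        exact huY
      · rw [hinn' (-a)]
        nlinarith [mul_pos hκ (neg_pos.mpr hua)]
end
end

section
/- Let Ω ⊆ Ā be non-empty and a ∈ Φ^red. Then f_Ω(a) = −∞ if and only if for every face F = F_Y^Δ ∈ Σ with Ω ∩ A_F ≠ ∅ the following holds: a ∉ ⟨Y⟩ and for every λ ∈ Λ with [λ₀(Δ) − λ] ⊆ Y and every positive integer l, the element λ + l·a does not lie in Λ. -/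
/-!
Common setup for Werner, "Compactifications of Bruhat-Tits buildings associated to
linear representations":  a finite-dimensional real vector space `A` (the apartment),
a root system `Φ` in the dual space together with a Weyl-group invariant inner
product, a finite Weyl-invariant set `Λ` of (K-)weights, and for every basis `Δ`
of `Φ` a highest weight `lam0 Δ ∈ Λ`.
-/

open Pointwise Filter Topology Bornology
open scoped Classical

noncomputable section

variable {A : Type*} [NormedAddCommGroup A] [NormedSpace ℝ A] [FiniteDimensional ℝ A]

/-!
`f_Ω(a) = -∞` says that `Ω` lies in the closure of every half-space `{a ≥ -t}` of `A`. A point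
`r_F(u)` lies in all these closures iff `a` is positive somewhere on the face `F`: if `a x > 0`
with `x ∈ F`, then `u + R x → r_F(u)` as `R → ∞`; if `a ≤ 0` on `F`, the neighbourhood
`Γ_F(U)` meets `A` only in `U + F`, where `a` is bounded above. Finally, `a` is positive
somewhere on `F_Y^Δ` iff `a ∉ ⟨Y⟩` and no `λ + l a` is a weight: one direction is evaluation on
the face; the other is immediate for positive roots and uses the reflection in `a` and the
connectedness of admissible sets for negative ones.
-/

section Coefficients

variable {E : Type*} [AddCommGroup E] [Module ℝ E] {Δ Y : Finset (Module.Dual ℝ E)}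
  {μ b : Module.Dual ℝ E}

lemma eq_of_sum_smul_eq (hΔ : LinearIndepOn ℝ id (Δ : Set (Module.Dual ℝ E)))
    {n m : Module.Dual ℝ E → ℝ} (h : ∑ b ∈ Δ, n b • b = ∑ b ∈ Δ, m b • b) :
    ∀ b ∈ Δ, n b = m b := by
  have h0 : ∑ b ∈ Δ, (n b - m b) • id b = 0 := by
    rw [← sub_eq_zero] at h
    rw [← h, ← Finset.sum_sub_distrib]
    exact Finset.sum_congr rfl fun b _ => sub_smul (n b) (m b) b
  exact fun b hb => sub_eq_zero.1 (linearIndepOn_iff'.1 hΔ Δ _ subset_rfl h0 b hb)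

lemma sum_ite_eq_smul (hb : b ∈ Δ) (c : ℝ) :
    ∑ x ∈ Δ, (if x = b then c else 0) • x = c • b := by
  simp [ite_smul, hb]

lemma coeffs_spec (h : ∃ n : Module.Dual ℝ E → ℝ, μ = ∑ b ∈ Δ, n b • b) :
    μ = ∑ b ∈ Δ, coeffs Δ μ b • b := by
  rw [coeffs, dif_pos h]
  exact h.choose_spec

lemma coeffs_eq (hΔ : LinearIndepOn ℝ id (Δ : Set (Module.Dual ℝ E)))
    {n : Module.Dual ℝ E → ℝ} (h : μ = ∑ b ∈ Δ, n b • b) : ∀ b ∈ Δ, coeffs Δ μ b = n b :=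
  eq_of_sum_smul_eq hΔ ((coeffs_spec ⟨n, h⟩).symm.trans h)

lemma supp_zero_s13 (hΔ : LinearIndepOn ℝ id (Δ : Set (Module.Dual ℝ E))) : supp Δ 0 = ∅ :=
  Finset.filter_false_of_mem fun b hb =>
    not_not.2 (coeffs_eq hΔ (n := 0) (by simp) b hb)

lemma coeffs_eq_zero_of_supp_subset (hsupp : supp Δ μ ⊆ Y) (hb : b ∈ Δ) (hbY : b ∉ Y) :
    coeffs Δ μ b = 0 :=
  not_not.1 fun hne => hbY (hsupp (Finset.mem_filter.2 ⟨hb, hne⟩))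

lemma sum_smul_apply (n : Module.Dual ℝ E → ℝ) (x : E) :
    (∑ b ∈ Δ, n b • b) x = ∑ b ∈ Δ, n b * b x := by
  simp [LinearMap.sum_apply]

lemma sum_smul_apply_of_forall_apply_eq_ite {P : Module.Dual ℝ E → Prop} [DecidablePred P]
    {x : E} (hx : ∀ b ∈ Δ, b x = if P b then 1 else 0) (n : Module.Dual ℝ E → ℝ) :
    (∑ b ∈ Δ, n b • b) x = ∑ b ∈ Δ with P b, n b := by
  rw [sum_smul_apply, Finset.sum_filter]
  exact Finset.sum_congr rfl fun b hb => by simp [hx b hb]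

lemma sum_smul_apply_pos {n : Module.Dual ℝ E → ℝ} (hn0 : ∀ b ∈ Δ, 0 ≤ n b)
    (hex : ∃ b ∈ Δ, b ∉ Y ∧ 0 < n b) {x : E} (hx : ∀ b ∈ Δ, b x = if b ∉ Y then 1 else 0) :
    0 < (∑ b ∈ Δ, n b • b) x := by
  obtain ⟨b, hb, hbY, hnb⟩ := hex
  rw [sum_smul_apply_of_forall_apply_eq_ite hx]
  exact Finset.sum_pos' (fun b hb => hn0 b (Finset.mem_filter.1 hb).1)
    ⟨b, Finset.mem_filter.2 ⟨hb, hbY⟩, hnb⟩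

lemma exists_coeff_pos_of_notMem_span {n : Module.Dual ℝ E → ℝ} (hn0 : ∀ b ∈ Δ, 0 ≤ n b)
    (hspan : ∑ b ∈ Δ, n b • b ∉ Submodule.span ℝ (Y : Set (Module.Dual ℝ E))) :
    ∃ b ∈ Δ, b ∉ Y ∧ 0 < n b := by
  by_contra! h
  refine hspan (Submodule.sum_mem _ fun b hb => ?_)
  by_cases hbY : b ∈ Y
  · exact Submodule.smul_mem _ _ (Submodule.subset_span hbY)
  · rw [le_antisymm (h b hb hbY) (hn0 b hb), zero_smul]
    exact Submodule.zero_mem _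

lemma apply_eq_zero_of_supp_subset (h : ∃ n : Module.Dual ℝ E → ℝ, μ = ∑ b ∈ Δ, n b • b)
    (hsupp : supp Δ μ ⊆ Y) {x : E} (hx : ∀ b ∈ Y, b x = 0) : μ x = 0 := by
  rw [coeffs_spec h, sum_smul_apply]
  refine Finset.sum_eq_zero fun b hb => ?_
  by_cases hbY : b ∈ Y
  · rw [hx b hbY, mul_zero]
  · rw [coeffs_eq_zero_of_supp_subset hsupp hb hbY, zero_mul]

lemma exists_forall_apply_eq [FiniteDimensional ℝ E]
    (hΔ : LinearIndepOn ℝ id (Δ : Set (Module.Dual ℝ E))) (c : Module.Dual ℝ E → ℝ) :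
    ∃ x : E, ∀ b ∈ Δ, b x = c b := by
  let B := Module.Basis.extend hΔ
  let ξ : Module.Dual ℝ (Module.Dual ℝ E) := B.constr ℝ fun i => c i
  refine ⟨(Module.evalEquiv ℝ E).symm ξ, fun b hb => ?_⟩
  have hbB : b ∈ hΔ.extend (Set.subset_univ _) := hΔ.subset_extend _ hb
  have hBb : B ⟨b, hbB⟩ = b := Module.Basis.extend_apply_self hΔ ⟨b, hbB⟩
  rw [Module.apply_evalEquiv_symm_apply, ← hBb, Module.Basis.constr_basis, hBb]

end Coefficients

section GraphConnected

variable {V : Type*} {inn : V → V → ℝ} {M : Set V}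

lemma GraphConnected.singleton (inn : V → V → ℝ) (x : V) : GraphConnected inn {x} := by
  rintro m rfl n rfl
  rfl

lemma GraphConnected.insert_of_ne_zero (hsymm : ∀ x y, inn x y = inn y x)
    (hM : GraphConnected inn M) {b c : V} (hb : b ∈ M) (hbc : inn b c ≠ 0) :
    GraphConnected inn (insert c M) := by
  have lift : ∀ {x y}, Relation.ReflTransGen (fun x y => x ∈ M ∧ y ∈ M ∧ inn x y ≠ 0) x y →
      Relation.ReflTransGen (fun x y => x ∈ insert c M ∧ y ∈ insert c M ∧ inn x y ≠ 0) x y :=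
    fun h => Relation.ReflTransGen.mono (fun _ _ h => ⟨Or.inr h.1, Or.inr h.2.1, h.2.2⟩) _ _ h
  have hbM : b ∈ insert c M := Or.inr hb
  have hcM : c ∈ insert c M := Or.inl rfl
  rintro m (rfl | hm) n (rfl | hn)
  · rfl
  · exact .head ⟨hcM, hbM, hsymm b m ▸ hbc⟩ (lift (hM b hb n hn))
  · exact .tail (lift (hM m hm b hb)) ⟨hbM, hcM, hbc⟩
  · exact lift (hM m hm n hn)

lemma GraphConnected.forall_mem_of_step (hM : GraphConnected inn M) {c : V} (hc : c ∈ M)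
    {P : V → Prop} (hPc : P c) (hstep : ∀ x ∈ M, ∀ y ∈ M, inn x y ≠ 0 → P x → P y) :
    ∀ y ∈ M, P y := by
  intro y hy
  have hpath := hM c hc y hy
  clear hy
  induction hpath with
  | refl => exact hPc
  | tail _ hxy ih => exact hstep _ hxy.1 _ hxy.2.1 hxy.2.2 ih

end GraphConnected

namespace RootWeightSystem

variable (S : RootWeightSystem A)

local notation "D" => Module.Dual ℝ A

def innLeft (μ : D) : D →ₗ[ℝ] ℝ where
  toFun x := S.inn x μ
  map_add' x y := S.inn_add_left x y μ
  map_smul' c x := S.inn_smul_left c x μ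

lemma inn_sub_left (x y μ : D) : S.inn (x - y) μ = S.inn x μ - S.inn y μ :=
  map_sub (S.innLeft μ) x y

lemma inn_sum_smul_left (s : Finset D) (n : D → ℝ) (μ : D) :
    S.inn (∑ b ∈ s, n b • b) μ = ∑ b ∈ s, n b * S.inn b μ := by
  have := map_sum (S.innLeft μ) (fun b => n b • b) s
  simpa only [innLeft, LinearMap.coe_mk, AddHom.coe_mk, S.inn_smul_left] using this

variable {S}

lemma inn_self_pos {v : D} (hv : v ∈ S.Φ) : 0 < S.inn v v :=
  S.inn_pos v (S.root_ne_zero v hv)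

lemma refl_mem_weights {v l : D} (hv : v ∈ S.Φ) (hl : l ∈ S.Λ) : S.refl v l ∈ S.Λ :=
  S.weight_weyl_invariant _ (Submonoid.subset_closure ⟨v, hv, rfl⟩) l hl

variable {Δ Y : Finset (Module.Dual ℝ A)}

lemma exists_lam0_sub_eq_sum (hΔ : S.IsBase Δ) {l : D} (hl : l ∈ S.Λ) :
    ∃ n : D → ℝ, S.lam0 Δ - l = ∑ b ∈ Δ, n b • b :=
  (S.lam0_dominates Δ hΔ l hl).imp fun _ => And.right

lemma coeffs_lam0_sub_nonneg (hΔ : S.IsBase Δ) {l : D} (hl : l ∈ S.Λ) :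
    ∀ b ∈ Δ, 0 ≤ coeffs Δ (S.lam0 Δ - l) b := by
  obtain ⟨n, hn0, hn⟩ := S.lam0_dominates Δ hΔ l hl
  exact fun b hb => coeffs_eq hΔ.2.1 hn b hb ▸ hn0 b hb

lemma inn_lam0_nonneg (hΔ : S.IsBase Δ) {b : D} (hb : b ∈ Δ) : 0 ≤ S.inn (S.lam0 Δ) b := by
  have hbΦ : b ∈ S.Φ := hΔ.1 hb
  set c := 2 * S.inn (S.lam0 Δ) b / S.inn b b
  obtain ⟨n, hn0, hn⟩ :=
    S.lam0_dominates Δ hΔ _ (refl_mem_weights hbΦ (S.lam0_mem Δ hΔ))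
  have hsum : S.lam0 Δ - S.refl b (S.lam0 Δ) = ∑ x ∈ Δ, (if x = b then c else 0) • x := by
    rw [sum_ite_eq_smul hb, RootWeightData.refl, sub_sub_cancel]
  have hc := eq_of_sum_smul_eq hΔ.2.1 (hn.symm.trans hsum) b hb
  rw [if_pos rfl] at hc
  have := (le_div_iff₀ (inn_self_pos hbΦ)).1 (hc ▸ hn0 b hb)
  linarith

/-- Simple roots make obtuse angles: otherwise reflecting one in the other gives a root with
coefficients of both signs. -/
lemma inn_nonpos_of_ne (hΔ : S.IsBase Δ) {b b' : D} (hb : b ∈ Δ) (hb' : b' ∈ Δ)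
    (hne : b ≠ b') : S.inn b b' ≤ 0 := by
  by_contra! hpos
  have hbΦ : b ∈ S.Φ := hΔ.1 hb
  set c := 2 * S.inn b' b / S.inn b b
  have hc : 0 < c := div_pos (by linarith [S.inn_symm b b']) (inn_self_pos hbΦ)
  have hm : b' - c • b =
      ∑ x ∈ Δ, ((if x = b' then 1 else 0) + (if x = b then -c else 0)) • x := by
    simp only [add_smul, Finset.sum_add_distrib, sum_ite_eq_smul hb, sum_ite_eq_smul hb']
    module
  have hroot : b' - c • b ∈ S.Φ := S.refl_mem b hbΦ b' (hΔ.1 hb')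
  rcases hΔ.2.2 _ hroot with ⟨n, hn0, hn⟩ | ⟨n, hn0, hn⟩
  · have := eq_of_sum_smul_eq hΔ.2.1 (hn.symm.trans hm) b hb
    simp only [if_neg hne, ↓reduceIte] at this
    linarith [hn0 b hb]
  · have hneg : ∀ x : D, (-n x) • x = -(n x • x) := fun x => by module
    have hn' : ∑ x ∈ Δ, (-n x) • x = b' - c • b := by
      rw [Finset.sum_congr rfl fun x _ => hneg x, Finset.sum_neg_distrib, ← hn]
    have := eq_of_sum_smul_eq hΔ.2.1 (hn'.trans hm) b' hb'
    simp only [if_neg (Ne.symm hne), ↓reduceIte] at this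
    linarith [hn0 b' hb']

lemma apply_lam0_sub_eq_zero_of_mem_face (hΔ : S.IsBase Δ) {x : A} (hx : x ∈ S.Face Δ Y)
    {l : D} (hl : l ∈ S.Λ) (hsupp : supp Δ (S.lam0 Δ - l) ⊆ Y) : (S.lam0 Δ - l) x = 0 :=
  apply_eq_zero_of_supp_subset (exists_lam0_sub_eq_sum hΔ hl) hsupp hx.1

lemma apply_lam0_sub_nonneg_of_mem_face (hΔ : S.IsBase Δ) {x : A} (hx : x ∈ S.Face Δ Y)
    {l : D} (hl : l ∈ S.Λ) : 0 ≤ (S.lam0 Δ - l) x := by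
  by_cases hsupp : supp Δ (S.lam0 Δ - l) ⊆ Y
  · exact (apply_lam0_sub_eq_zero_of_mem_face hΔ hx hl hsupp).ge
  · exact (hx.2 l hl hsupp).le

lemma mem_face_of_forall (hΔ : S.IsBase Δ) {x : A} (hY : ∀ b ∈ Y, b x = 0)
    (hΔx : ∀ b ∈ Δ, 0 ≤ b x)
    (hpos : ∀ l ∈ S.Λ, ¬ supp Δ (S.lam0 Δ - l) ⊆ Y → ∃ b ∈ supp Δ (S.lam0 Δ - l), 0 < b x) :
    x ∈ S.Face Δ Y := by
  refine ⟨hY, fun l hl hns => ?_⟩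
  obtain ⟨b, hb, hbx⟩ := hpos l hl hns
  obtain ⟨hbΔ, hcb⟩ := Finset.mem_filter.1 hb
  have hc := coeffs_lam0_sub_nonneg hΔ hl
  rw [coeffs_spec (exists_lam0_sub_eq_sum hΔ hl), sum_smul_apply]
  exact Finset.sum_pos' (fun b' hb' => mul_nonneg (hc b' hb') (hΔx b' hb'))
    ⟨b, hbΔ, mul_pos ((hc b hbΔ).lt_of_ne' hcb) hbx⟩

lemma exists_mem_face_apply_eq_ite (hΔ : S.IsBase Δ) (hYΔ : Y ⊆ Δ) (P : D → Prop)
    [DecidablePred P] (hPY : ∀ b ∈ Y, ¬ P b)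
    (hP : ∀ l ∈ S.Λ, ¬ supp Δ (S.lam0 Δ - l) ⊆ Y → ∃ b ∈ supp Δ (S.lam0 Δ - l), P b) :
    ∃ x ∈ S.Face Δ Y, ∀ b ∈ Δ, b x = if P b then 1 else 0 := by
  obtain ⟨x, hx⟩ := exists_forall_apply_eq hΔ.2.1 fun b => if P b then (1 : ℝ) else 0
  refine ⟨x, mem_face_of_forall hΔ (fun b hb => ?_) (fun b hb => ?_) fun l hl hns => ?_, hx⟩
  · rw [hx b (hYΔ hb), if_neg (hPY b hb)]
  · rw [hx b hb]
    split_ifs <;> norm_num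
  · obtain ⟨b, hb, hPb⟩ := hP l hl hns
    exact ⟨b, hb, by rw [hx b (Finset.mem_filter.1 hb).1, if_pos hPb]; exact one_pos⟩

lemma exists_mem_face_apply_eq_ite_notMem (hΔ : S.IsBase Δ) (hYΔ : Y ⊆ Δ) :
    ∃ x ∈ S.Face Δ Y, ∀ b ∈ Δ, b x = if b ∉ Y then 1 else 0 :=
  exists_mem_face_apply_eq_ite hΔ hYΔ (· ∉ Y) (fun _ hb h => h hb) fun _ _ hns =>
    Finset.not_subset.1 hns

lemma IsFace.nonempty {F : Set A} (hF : S.IsFace F) : F.Nonempty := by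
  obtain ⟨Δ, Y, hΔ, hY, rfl⟩ := hF
  obtain ⟨x, hx, -⟩ := exists_mem_face_apply_eq_ite_notMem hΔ hY.1
  exact ⟨x, hx⟩

lemma smul_mem_face {x : A} (hx : x ∈ S.Face Δ Y) {c : ℝ} (hc : 0 < c) :
    c • x ∈ S.Face Δ Y :=
  ⟨fun b hb => by rw [map_smul, hx.1 b hb, smul_zero],
    fun l hl hns => by rw [map_smul, smul_eq_mul]; exact mul_pos hc (hx.2 l hl hns)⟩

lemma zero_mem_closure_face (hne : (S.Face Δ Y).Nonempty) : (0 : A) ∈ closure (S.Face Δ Y) := by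
  obtain ⟨x, hx⟩ := hne
  have hlim : Tendsto (fun δ : ℝ => δ • x) (𝓝[>] 0) (𝓝 0) := by
    simpa using (tendsto_id.smul_const x).mono_left (nhdsWithin_le_nhds (a := (0 : ℝ)))
  exact mem_closure_of_tendsto hlim
    (eventually_nhdsWithin_of_forall fun δ hδ => smul_mem_face hx hδ)

lemma add_mem_face_of_mem_closure {x y : A} (hx : x ∈ S.Face Δ Y)
    (hy : y ∈ closure (S.Face Δ Y)) : x + y ∈ S.Face Δ Y := by
  refine ⟨fun b hb => ?_, fun l hl hns => ?_⟩
  · have hyb : b y = 0 := closure_minimal (fun z hz => hz.1 b hb)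
      (isClosed_eq (LinearMap.continuous_of_finiteDimensional b) continuous_const) hy
    rw [map_add, hx.1 b hb, hyb, add_zero]
  · have hyl : 0 ≤ (S.lam0 Δ - l) y := closure_minimal (t := {z | 0 ≤ (S.lam0 Δ - l) z})
      (fun z hz => (hz.2 l hl hns).le)
      (isClosed_le continuous_const (LinearMap.continuous_of_finiteDimensional _)) hy
    rw [map_add]
    exact add_pos_of_pos_of_nonneg (hx.2 l hl hns) hyl

lemma eventually_add_smul_mem_face {x y : A} (hx : x ∈ S.Face Δ Y) (hy : ∀ b ∈ Y, b y = 0) :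
    ∀ᶠ δ in 𝓝 (0 : ℝ), x + δ • y ∈ S.Face Δ Y := by
  have hpos : ∀ l ∈ S.Λ, ∀ᶠ δ in 𝓝 (0 : ℝ),
      ¬ supp Δ (S.lam0 Δ - l) ⊆ Y → 0 < (S.lam0 Δ - l) (x + δ • y) := by
    intro l hl
    by_cases hns : supp Δ (S.lam0 Δ - l) ⊆ Y
    · exact Eventually.of_forall fun _ h => absurd hns h
    have hcont : Continuous fun δ : ℝ => (S.lam0 Δ - l) (x + δ • y) :=
      (LinearMap.continuous_of_finiteDimensional _).comp (continuous_const.add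
        (continuous_id.smul continuous_const))
    have h0 : 0 < (S.lam0 Δ - l) (x + (0 : ℝ) • y) := by simpa using hx.2 l hl hns
    exact (hcont.continuousAt.eventually (lt_mem_nhds h0)).mono fun _ h _ => h
  filter_upwards [(eventually_all_finset S.Λ).2 hpos] with δ hδ
  exact ⟨fun b hb => by rw [map_add, map_smul, hx.1 b hb, hy b hb, smul_zero, add_zero], hδ⟩

lemma eventually_smul_add_mem_face {x y : A} (hx : x ∈ S.Face Δ Y) (hy : ∀ b ∈ Y, b y = 0) :
    ∀ᶠ R : ℝ in atTop, R • x + y ∈ S.Face Δ Y := by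
  filter_upwards [tendsto_inv_atTop_zero.eventually (eventually_add_smul_mem_face hx hy),
    eventually_gt_atTop 0] with R hR hRpos
  convert smul_mem_face hR hRpos using 1
  rw [smul_add, smul_smul, mul_inv_cancel₀ hRpos.ne', one_smul]

lemma apply_eq_zero_of_mem_span {x : A} (hx : x ∈ S.Face Δ Y) {a : D}
    (ha : a ∈ Submodule.span ℝ (Y : Set D)) : a x = 0 :=
  LinearMap.eqOn_span (f := Module.Dual.eval ℝ A x) (g := 0) (fun b hb => hx.1 b hb) ha

lemma apply_nonpos_of_add_smul_mem (hΔ : S.IsBase Δ) {x : A} (hx : x ∈ S.Face Δ Y) {l a : D}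
    (hl : l ∈ S.Λ) (hsupp : supp Δ (S.lam0 Δ - l) ⊆ Y) {k : ℕ} (hk : 0 < k)
    (hlk : l + (k : ℝ) • a ∈ S.Λ) : a x ≤ 0 := by
  have h0 := apply_lam0_sub_eq_zero_of_mem_face hΔ hx hl hsupp
  have h1 := apply_lam0_sub_nonneg_of_mem_face hΔ hx hlk
  have hk' : (0 : ℝ) < k := Nat.cast_pos.2 hk
  simp only [LinearMap.sub_apply, LinearMap.add_apply, LinearMap.smul_apply, smul_eq_mul]
    at h0 h1
  nlinarith

section NegativeRoot

variable {v : Module.Dual ℝ A} {n : Module.Dual ℝ A → ℝ}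

/-- If the pairing were positive, the reflection `l - k v` would be a weight; if negative,
`λ₀ - (l - k v)` would have a negative coefficient at a simple root outside `Y`. -/
lemma inn_eq_zero_of_supp_subset (hΔ : S.IsBase Δ) (hv : v ∈ S.Φ)
    (hn : v = ∑ b ∈ Δ, n b • b) (hex : ∃ b ∈ Δ, b ∉ Y ∧ 0 < n b)
    (hβ : ∀ l ∈ S.Λ, supp Δ (S.lam0 Δ - l) ⊆ Y → ∀ k : ℕ, 0 < k → l - (k : ℝ) • v ∉ S.Λ)
    {l : D} (hl : l ∈ S.Λ) (hsupp : supp Δ (S.lam0 Δ - l) ⊆ Y) : S.inn l v = 0 := by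
  obtain ⟨k, hk⟩ := S.integrality l hl v hv
  have hrefl : l - (k : ℝ) • v ∈ S.Λ := by
    rw [← hk]
    exact refl_mem_weights hv hl
  rcases lt_trichotomy k 0 with hkneg | rfl | hkpos
  · exfalso
    obtain ⟨b, hbΔ, hbY, hnb⟩ := hex
    have hsum : S.lam0 Δ - (l - (k : ℝ) • v) =
        ∑ x ∈ Δ, (coeffs Δ (S.lam0 Δ - l) x + k * n x) • x := by
      have e : S.lam0 Δ - (l - (k : ℝ) • v) = (S.lam0 Δ - l) + (k : ℝ) • v := by abel
      rw [e, hn, Finset.smul_sum]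
      simp only [add_smul, Finset.sum_add_distrib, smul_smul,
        ← coeffs_spec (exists_lam0_sub_eq_sum hΔ hl)]
    have hcoeff := coeffs_lam0_sub_nonneg hΔ hrefl b hbΔ
    rw [coeffs_eq hΔ.2.1 hsum b hbΔ, coeffs_eq_zero_of_supp_subset hsupp hbΔ hbY] at hcoeff
    have : (k : ℝ) * n b < 0 := mul_neg_of_neg_of_pos (Int.cast_lt_zero.2 hkneg) hnb
    linarith
  · simpa [(inn_self_pos hv).ne'] using hk
  · refine absurd ?_ (hβ l hl hsupp k.toNat (by omega))
    have hcast : ((k.toNat : ℕ) : ℝ) = k := by exact_mod_cast Int.toNat_of_nonneg hkpos.le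
    rwa [hcast]

lemma inn_lam0_eq_zero_of_coeff_ne_zero (hΔ : S.IsBase Δ) (hn0 : ∀ b ∈ Δ, 0 ≤ n b)
    (hn : v = ∑ b ∈ Δ, n b • b) (h : S.inn (S.lam0 Δ) v = 0) :
    ∀ b ∈ Δ, n b ≠ 0 → S.inn (S.lam0 Δ) b = 0 := by
  intro b hb hnb
  rw [S.inn_symm, hn, S.inn_sum_smul_left] at h
  have hterms : ∀ x ∈ Δ, 0 ≤ n x * S.inn x (S.lam0 Δ) := fun x hx =>
    mul_nonneg (hn0 x hx) (S.inn_symm x _ ▸ inn_lam0_nonneg hΔ hx)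
  rw [S.inn_symm]
  exact (mul_eq_zero.1 ((Finset.sum_eq_zero_iff_of_nonneg hterms).1 h b hb)).resolve_left hnb

lemma inn_eq_zero_of_coeff_ne_zero (hΔ : S.IsBase Δ) (hn0 : ∀ b ∈ Δ, 0 ≤ n b)
    (hn : v = ∑ b ∈ Δ, n b • b) {p : D} (hp : p ∈ Δ) (hnp : n p = 0) (h : S.inn v p = 0) :
    ∀ b ∈ Δ, n b ≠ 0 → S.inn b p = 0 := by
  intro b hb hnb
  rw [hn, S.inn_sum_smul_left] at h
  have hterms : ∀ x ∈ Δ, n x * S.inn x p ≤ 0 := fun x hx => by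
    by_cases hxp : x = p
    · rw [hxp, hnp, zero_mul]
    · exact mul_nonpos_of_nonneg_of_nonpos (hn0 x hx) (inn_nonpos_of_ne hΔ hx hp hxp)
  exact (mul_eq_zero.1 ((Finset.sum_eq_zero_iff_of_nonpos hterms).1 h b hb)).resolve_left hnb

lemma inn_eq_zero_of_insert (hΔ : S.IsBase Δ)
    (horth : ∀ l ∈ S.Λ, supp Δ (S.lam0 Δ - l) ⊆ Y → S.inn l v = 0) {q : D} {Y' : Finset D}
    (hadm : S.Admissible Δ (insert q Y')) (hsub : insert q Y' ⊆ Y)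
    (hY' : ∀ b ∈ Y', S.inn b v = 0) : S.inn q v = 0 := by
  obtain ⟨l, hl, hsupp⟩ := (S.admissible_iff_support Δ hΔ _ hadm.1).1 hadm
  have hlam0 := horth _ (S.lam0_mem Δ hΔ) (by simp [supp_zero_s13 hΔ.2.1])
  have h : S.inn (S.lam0 Δ - l) v = 0 := by
    rw [S.inn_sub_left, hlam0, horth l hl (hsupp ▸ hsub), sub_zero]
  have hq : q ∈ supp Δ (S.lam0 Δ - l) := hsupp ▸ Finset.mem_insert_self q Y'
  rw [coeffs_spec (exists_lam0_sub_eq_sum hΔ hl), S.inn_sum_smul_left,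
    Finset.sum_eq_single_of_mem q (Finset.mem_filter.1 hq).1 fun x hx hxq => ?_] at h
  · exact (mul_eq_zero.1 h).resolve_left (Finset.mem_filter.1 hq).2
  · by_cases hcx : coeffs Δ (S.lam0 Δ - l) x = 0
    · rw [hcx, zero_mul]
    · have hx' : x ∈ insert q Y' := hsupp ▸ Finset.mem_filter.2 ⟨hx, hcx⟩
      rw [hY' x ((Finset.mem_insert.1 hx').resolve_left hxq), mul_zero]

/-- Walking from `λ₀(Δ)` through the connected set `Y ∪ {λ₀(Δ)}`, each new vertex `q`, added to
an admissible `Y'` already orthogonal to `v`, is the only unknown term of `(λ₀ - l, v) = 0` for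
the weight `l` with support `insert q Y'`. -/
lemma inn_eq_zero_of_mem_admissible (hΔ : S.IsBase Δ) (hY : S.Admissible Δ Y)
    (horth : ∀ l ∈ S.Λ, supp Δ (S.lam0 Δ - l) ⊆ Y → S.inn l v = 0) :
    ∀ b ∈ Y, S.inn b v = 0 := by
  have hlam0 := horth _ (S.lam0_mem Δ hΔ) (by simp [supp_zero_s13 hΔ.2.1])
  have hwalk := hY.2.forall_mem_of_step (c := S.lam0 Δ) (Or.inr rfl)
    (P := fun q => ∃ Y' ⊆ Y, S.Admissible Δ Y' ∧ (∀ b ∈ Y', S.inn b v = 0) ∧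
      q ∈ (Y' : Set D) ∪ {S.lam0 Δ})
    ⟨∅, Finset.empty_subset _,
      ⟨Finset.empty_subset _, by simpa using GraphConnected.singleton S.inn (S.lam0 Δ)⟩,
      by simp, Or.inr rfl⟩ ?_
  · intro b hb
    obtain ⟨Y', -, -, hY', hbY' | hb0⟩ := hwalk b (Or.inl hb)
    · exact hY' b hbY'
    · rw [Set.mem_singleton_iff.1 hb0]
      exact hlam0
  · rintro x - y hy hxy ⟨Y', hY'Y, hY'adm, hY', hx⟩
    rcases hy with hyY | hy0
    · have hsub : insert y Y' ⊆ Y := Finset.insert_subset hyY hY'Y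
      have hadm : S.Admissible Δ (insert y Y') := by
        refine ⟨hsub.trans hY.1, ?_⟩
        rw [Finset.coe_insert, Set.insert_union]
        exact hY'adm.2.insert_of_ne_zero S.inn_symm hx hxy
      refine ⟨insert y Y', hsub, hadm, fun b hb => ?_, Or.inl (Finset.mem_insert_self y Y')⟩
      rcases Finset.mem_insert.1 hb with rfl | hb
      · exact inn_eq_zero_of_insert hΔ horth hadm hsub hY'
      · exact hY' b hb
    · exact ⟨Y', hY'Y, hY'adm, hY', Or.inr hy0⟩

lemma coeff_eq_zero_of_admissible (hΔ : S.IsBase Δ) {T : Finset D} (hT : S.Admissible Δ T)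
    (hlam0 : ∀ b ∈ Δ, n b ≠ 0 → S.inn (S.lam0 Δ) b = 0)
    (horth : ∀ p ∈ T, n p = 0 → ∀ b ∈ Δ, n b ≠ 0 → S.inn b p = 0) :
    ∀ q ∈ T, n q = 0 := by
  have hne : ∀ b ∈ Δ, n b ≠ 0 → b ≠ S.lam0 Δ := fun b hb hnb hb0 =>
    (inn_self_pos (hΔ.1 hb)).ne' (hb0 ▸ hlam0 b hb hnb)
  have hwalk := hT.2.forall_mem_of_step (c := S.lam0 Δ) (Or.inr rfl)
    (P := fun q => q = S.lam0 Δ ∨ n q = 0) (Or.inl rfl) ?_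
  · intro q hq
    rcases hwalk q (Or.inl hq) with hq0 | hnq
    · by_contra hnq
      exact hne q (hT.1 hq) hnq hq0
    · exact hnq
  · rintro x hx y hy hxy hPx
    by_contra! hPy
    have hyT : y ∈ T := hy.resolve_right hPy.1
    apply hxy
    by_cases hx0 : x = S.lam0 Δ
    · rw [hx0]
      exact hlam0 y (hT.1 hyT) hPy.2
    · rw [S.inn_symm]
      exact horth x (hx.resolve_right hx0) (hPx.resolve_left hx0) y (hT.1 hyT) hPy.2

/-- Every weight supported in `Y`, in particular `λ₀(Δ)`, is orthogonal to `v`, and by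
connectedness so is `Y`. By positivity the simple roots in `supp v` are then orthogonal to
`λ₀(Δ)` and to `Y ∖ supp v`, so connectedness of supports puts a simple root outside
`Y ∪ supp v` into the support of every weight not supported in `Y`. So if `x₀` is `1` on these
simple roots and `0` on the others, and `x₁` is `1` off `Y`, then `R x₀ - x₁` lies in the face
for large `R`, and `v` is negative there. -/
lemma exists_mem_face_apply_neg (hΔ : S.IsBase Δ) (hY : S.Admissible Δ Y)
    (hv : v ∈ S.Φ) (hn0 : ∀ b ∈ Δ, 0 ≤ n b) (hn : v = ∑ b ∈ Δ, n b • b)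
    (hex : ∃ b ∈ Δ, b ∉ Y ∧ 0 < n b)
    (hβ : ∀ l ∈ S.Λ, supp Δ (S.lam0 Δ - l) ⊆ Y → ∀ k : ℕ, 0 < k → l - (k : ℝ) • v ∉ S.Λ) :
    ∃ x ∈ S.Face Δ Y, v x < 0 := by
  have horth : ∀ l ∈ S.Λ, supp Δ (S.lam0 Δ - l) ⊆ Y → S.inn l v = 0 :=
    fun l hl => inn_eq_zero_of_supp_subset hΔ hv hn hex hβ hl
  have hlam0 : ∀ b ∈ Δ, n b ≠ 0 → S.inn (S.lam0 Δ) b = 0 :=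
    inn_lam0_eq_zero_of_coeff_ne_zero hΔ hn0 hn
      (horth _ (S.lam0_mem Δ hΔ) (by simp [supp_zero_s13 hΔ.2.1]))
  have hYorth : ∀ p ∈ Y, n p = 0 → ∀ b ∈ Δ, n b ≠ 0 → S.inn b p = 0 := fun p hp hnp =>
    inn_eq_zero_of_coeff_ne_zero hΔ hn0 hn (hY.1 hp) hnp
      (S.inn_symm v p ▸ inn_eq_zero_of_mem_admissible hΔ hY horth p hp)
  have hsupp : ∀ l ∈ S.Λ, ¬ supp Δ (S.lam0 Δ - l) ⊆ Y →
      ∃ b ∈ supp Δ (S.lam0 Δ - l), b ∉ Y ∧ n b = 0 := by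
    intro l hl hns
    by_contra! hcon
    have hT : S.Admissible Δ (supp Δ (S.lam0 Δ - l)) :=
      (S.admissible_iff_support Δ hΔ _ (Finset.filter_subset _ _)).2 ⟨l, hl, rfl⟩
    have hnT := coeff_eq_zero_of_admissible hΔ hT hlam0 fun p hp hnp =>
      hYorth p (by_contra fun hpY => hcon p hp hpY hnp) hnp
    obtain ⟨b, hb, hbY⟩ := Finset.not_subset.1 hns
    exact hcon b hb hbY (hnT b hb)
  obtain ⟨x₀, hx₀, hx₀Δ⟩ := exists_mem_face_apply_eq_ite hΔ hY.1
    (fun b => b ∉ Y ∧ n b = 0) (fun _ hb h => h.1 hb) hsupp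
  obtain ⟨x₁, -, hx₁Δ⟩ := exists_mem_face_apply_eq_ite_notMem hΔ hY.1
  have hx₁Y : ∀ b ∈ Y, b (-x₁) = 0 := fun b hb => by
    rw [map_neg, hx₁Δ b (hY.1 hb), if_neg (not_not.2 hb), neg_zero]
  obtain ⟨R, hR⟩ := (eventually_smul_add_mem_face hx₀ hx₁Y).exists
  have h₀ : v x₀ = 0 := by
    rw [hn, sum_smul_apply_of_forall_apply_eq_ite hx₀Δ]
    exact Finset.sum_eq_zero fun b hb => (Finset.mem_filter.1 hb).2.2
  have h₁ : 0 < v x₁ := hn ▸ sum_smul_apply_pos hn0 hex hx₁Δ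
  refine ⟨_, hR, ?_⟩
  rw [map_add, map_smul, map_neg, h₀, smul_zero, zero_add]
  exact neg_neg_of_pos h₁

end NegativeRoot

lemma exists_mem_face_apply_pos (hΔ : S.IsBase Δ) (hY : S.Admissible Δ Y) {a : D}
    (ha : a ∈ S.Φ) (hspan : a ∉ Submodule.span ℝ (Y : Set D))
    (hβ : ∀ l ∈ S.Λ, supp Δ (S.lam0 Δ - l) ⊆ Y → ∀ k : ℕ, 0 < k → l + (k : ℝ) • a ∉ S.Λ) :
    ∃ x ∈ S.Face Δ Y, 0 < a x := by
  rcases hΔ.2.2 a ha with ⟨n, hn0, rfl⟩ | ⟨n, hn0, rfl⟩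
  · obtain ⟨x, hx, hxΔ⟩ := exists_mem_face_apply_eq_ite_notMem hΔ hY.1
    exact ⟨x, hx, sum_smul_apply_pos hn0 (exists_coeff_pos_of_notMem_span hn0 hspan) hxΔ⟩
  · have hv : ∑ b ∈ Δ, n b • b ∈ S.Φ := neg_neg (∑ b ∈ Δ, n b • b) ▸ S.neg_mem _ ha
    have hex := exists_coeff_pos_of_notMem_span hn0 fun h => hspan (Submodule.neg_mem _ h)
    obtain ⟨x, hx, hvx⟩ := exists_mem_face_apply_neg hΔ hY hv hn0 rfl hex fun l hl hsupp k hk => by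
      simpa only [smul_neg, ← sub_eq_add_neg] using hβ l hl hsupp k hk
    exact ⟨x, hx, by rw [LinearMap.neg_apply]; exact neg_pos.2 hvx⟩

lemma exists_mem_face_apply_pos_iff (hΔ : S.IsBase Δ) (hY : S.Admissible Δ Y) {a : D}
    (ha : a ∈ S.Φ) :
    (∃ x ∈ S.Face Δ Y, 0 < a x) ↔ a ∉ Submodule.span ℝ (Y : Set D) ∧
      ∀ l ∈ S.Λ, supp Δ (S.lam0 Δ - l) ⊆ Y → ∀ k : ℕ, 0 < k → l + (k : ℝ) • a ∉ S.Λ := by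
  refine ⟨fun ⟨x, hx, hax⟩ => ⟨fun hspan => hax.ne' (apply_eq_zero_of_mem_span hx hspan),
    fun l hl hsupp k hk hlk => hax.not_ge (apply_nonpos_of_add_smul_mem hΔ hx hl hsupp hk hlk)⟩,
    fun ⟨hspan, hβ⟩ => exists_mem_face_apply_pos hΔ hY ha hspan hβ⟩

variable (S) in
lemma abarRel_equivalence : Equivalence S.AbarRel where
  refl p := ⟨rfl, by simp⟩
  symm {p q} h := ⟨h.1.symm, h.1 ▸ by simpa using Submodule.neg_mem _ h.2⟩
  trans {p q r} h h' := ⟨h.1.trans h'.1, by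
    simpa using Submodule.add_mem _ h.2 (h.1 ▸ h'.2 : q.2 - r.2 ∈ Submodule.span ℝ p.1.val)⟩

lemma mkAbar_eq_mkAbar_iff {F F' : S.Faces} {u w : A} :
    S.mkAbar F u = S.mkAbar F' w ↔ F = F' ∧ u - w ∈ Submodule.span ℝ F.val :=
  ⟨fun h => S.abarRel_equivalence.eqvGen_iff.1 (Quot.eq.1 h), fun h => Quot.sound h⟩

lemma isOpen_gamma (F : S.Faces) {U : Set A} (hU : IsOpen U) (hB : IsBounded U) :
    IsOpen (S.Gamma F U) :=
  TopologicalSpace.GenerateOpen.basic _ ⟨F, U, hU, hB, rfl⟩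

lemma mkAbar_mem_gamma (F : S.Faces) {U : Set A} {u : A} (hu : u ∈ U) :
    S.mkAbar F u ∈ S.Gamma F U := by
  obtain ⟨f, hf⟩ := IsFace.nonempty F.2
  refine ⟨F, subset_closure, u + f, Set.add_mem_add hu hf, mkAbar_eq_mkAbar_iff.2 ⟨rfl, ?_⟩⟩
  rw [sub_add_cancel_left]
  exact Submodule.neg_mem _ (Submodule.subset_span hf)

lemma mem_add_of_mkAbar_mem_gamma {F₀ G : S.Faces} (hF₀ : F₀.val = {0}) {U : Set A} {z : A}
    (h : S.mkAbar F₀ z ∈ S.Gamma G U) : z ∈ U + G.val := by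
  obtain ⟨F', -, w, hw, hzw⟩ := h
  obtain ⟨rfl, hd⟩ := mkAbar_eq_mkAbar_iff.1 hzw
  rw [hF₀, Submodule.span_zero_singleton, Submodule.mem_bot, sub_eq_zero] at hd
  exact hd ▸ hw

lemma tendsto_mkAbar_add_smul {F₀ : S.Faces} (hF₀ : F₀.val = {0}) {F : S.Faces}
    (hF : F.val = S.Face Δ Y) {x : A} (hx : x ∈ S.Face Δ Y) (u : A) :
    Tendsto (fun R : ℝ => S.mkAbar F₀ (u + R • x)) atTop (𝓝 (S.mkAbar F u)) := by
  refine TopologicalSpace.tendsto_nhds_generateFrom_iff.2 ?_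
  rintro _ ⟨G, U, -, -, rfl⟩ ⟨F', hFG, w, ⟨w₀, hw₀, g, hg, rfl⟩, hFw⟩
  obtain ⟨rfl, hd⟩ := mkAbar_eq_mkAbar_iff.1 hFw
  obtain ⟨ΔG, YG, -, -, hG⟩ := G.2
  have hdY : ∀ b ∈ Y, b (u - (w₀ + g)) = 0 := fun b hb =>
    LinearMap.eqOn_span (f := b) (g := 0) (fun z hz => (hF ▸ hz : z ∈ S.Face Δ Y).1 b hb) hd
  filter_upwards [eventually_smul_add_mem_face hx hdY] with R hR
  have h0 : F₀.val ⊆ closure G.val := by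
    rw [hF₀, Set.singleton_subset_iff, hG]
    exact zero_mem_closure_face (hG ▸ IsFace.nonempty G.2)
  have hgR : g + (R • x + (u - (w₀ + g))) ∈ G.val := by
    rw [hG] at hg hFG ⊢
    exact add_mem_face_of_mem_closure hg (hFG (hF ▸ hR))
  exact ⟨F₀, h0, _, Set.add_mem_add hw₀ hgR, congrArg (S.mkAbar F₀) (by abel)⟩

lemma fOmega_eq_bot_iff_forall (F₀ : S.Faces) (Ω : Set S.Abar) (a : D) :
    S.fOmega F₀ Ω a = ⊥ ↔ ∀ t : ℝ, Ω ⊆ closure (S.mkAbar F₀ '' {z | -t ≤ a z}) := by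
  rw [fOmega, sInf_eq_bot]
  constructor
  · intro h t
    obtain ⟨_, ⟨s, hs, rfl⟩, hst⟩ := h t (EReal.bot_lt_coe t)
    have hst : s < t := EReal.coe_lt_coe_iff.1 hst
    refine hs.trans (closure_mono (Set.image_mono fun z (hz : -s ≤ a z) => ?_))
    show -t ≤ a z
    linarith
  · intro h b hb
    obtain ⟨r, -, hr⟩ := EReal.lt_iff_exists_real_btwn.1 hb
    exact ⟨r, ⟨r, h r, rfl⟩, hr⟩

lemma forall_subset_closure_iff {F₀ : S.Faces} (hF₀ : F₀.val = {0}) (Ω : Set S.Abar) (a : D) :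
    (∀ t : ℝ, Ω ⊆ closure (S.mkAbar F₀ '' {z | -t ≤ a z})) ↔
      ∀ F : S.Faces, (∃ p ∈ Ω, ∃ u : A, p = S.mkAbar F u) → ∃ x ∈ F.val, 0 < a x := by
  constructor
  · rintro h F ⟨p, hp, u, rfl⟩
    by_contra! hle
    obtain ⟨ε, hε, hball⟩ := Metric.continuousAt_iff.1
      (LinearMap.continuous_of_finiteDimensional a).continuousAt 1 one_pos
    obtain ⟨_, hΓ, z, hz, rfl⟩ := mem_closure_iff.1 (h (-a u - 2) hp) _
      (S.isOpen_gamma F Metric.isOpen_ball Metric.isBounded_ball)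
      (S.mkAbar_mem_gamma F (Metric.mem_ball_self hε))
    obtain ⟨w, hw, f, hf, rfl⟩ := mem_add_of_mkAbar_mem_gamma hF₀ hΓ
    have hwu := (abs_lt.1 (hball hw)).2
    have hz' : -(-a u - 2) ≤ a w + a f := by simpa using hz
    linarith [hle f hf]
  · intro h t q hq
    obtain ⟨⟨F, u⟩, rfl⟩ := Quot.exists_rep q
    obtain ⟨Δ, Y, -, -, hF⟩ := F.2
    obtain ⟨x, hx, hax⟩ := h F ⟨_, hq, u, rfl⟩
    refine mem_closure_of_tendsto (tendsto_mkAbar_add_smul hF₀ hF (hF ▸ hx) u) ?_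
    filter_upwards [eventually_ge_atTop ((-t - a u) / a x)] with R hR
    refine ⟨u + R • x, ?_, rfl⟩
    rw [div_le_iff₀ hax] at hR
    show -t ≤ a (u + R • x)
    rw [map_add, map_smul, smul_eq_mul]
    linarith

end RootWeightSystem

theorem fOmega_eq_bot_iff_general (S : RootWeightSystem A)
    (F₀ : S.Faces) (hF₀ : F₀.val = ({0} : Set A))
    (Ω : Set S.Abar)
    (a : Module.Dual ℝ A) (ha : a ∈ S.Φ) :
    S.fOmega F₀ Ω a = ⊥ ↔
      ∀ (F : S.Faces) (Δ Y : Finset (Module.Dual ℝ A)),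
        S.toRootWeightData.IsBase Δ → S.toRootWeightData.Admissible Δ Y →
        F.val = S.Face Δ Y → (∃ p ∈ Ω, ∃ u : A, p = S.mkAbar F u) →
        (a ∉ Submodule.span ℝ ((Y : Set (Module.Dual ℝ A))) ∧
          ∀ l ∈ S.Λ, supp Δ (S.lam0 Δ - l) ⊆ Y →
            ∀ k : ℕ, 0 < k → l + (k : ℝ) • a ∉ S.Λ) := by
  rw [S.fOmega_eq_bot_iff_forall, S.forall_subset_closure_iff hF₀]
  constructor
  · intro h F Δ Y hΔ hY hF hmeet
    exact (S.exists_mem_face_apply_pos_iff hΔ hY ha).1 (hF ▸ h F hmeet)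
  · intro h F hmeet
    obtain ⟨Δ, Y, hΔ, hY, hF⟩ := F.2
    rw [hF]
    exact (S.exists_mem_face_apply_pos_iff hΔ hY ha).2 (h F Δ Y hΔ hY hF hmeet)

/-- For non-empty `Ω ⊆ Ā` and a non-divisible root `a`, one has
`f_Ω(a) = -∞` iff, for every face `F = F_Y^Δ` whose stratum meets `Ω`: `a ∉ ⟨Y⟩` and
for every `λ ∈ Λ` with `[λ₀(Δ) - λ] ⊆ Y` and every positive integer `l`, the element
`λ + l·a` is not a weight. -/
theorem fOmega_eq_bot_iff (S : RootWeightSystem A)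
    (F₀ : S.Faces) (hF₀ : F₀.val = ({0} : Set A))
    (Ω : Set S.Abar) (hΩ : Ω.Nonempty)
    (a : Module.Dual ℝ A) (ha : a ∈ S.Φ) (hared : (2⁻¹ : ℝ) • a ∉ S.Φ) :
    S.fOmega F₀ Ω a = ⊥ ↔
      ∀ (F : S.Faces) (Δ Y : Finset (Module.Dual ℝ A)),
        S.toRootWeightData.IsBase Δ → S.toRootWeightData.Admissible Δ Y →
        F.val = S.Face Δ Y → (∃ p ∈ Ω, ∃ u : A, p = S.mkAbar F u) →
        (a ∉ Submodule.span ℝ ((Y : Set (Module.Dual ℝ A))) ∧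
          ∀ l ∈ S.Λ, supp Δ (S.lam0 Δ - l) ⊆ Y →
            ∀ k : ℕ, 0 < k → l + (k : ℝ) • a ∉ S.Λ) :=
  fOmega_eq_bot_iff_general S F₀ hF₀ Ω a ha
end
end
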